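/- arXiv:2110.08900 — 2 statements merged into one kernel-verified Lean document; each statement's English description precedes it below -/
import Mathlib

section
/- Let m ≥ 1, let p_j, q_j ∈ (0,1) for j = 1,…,m, and let θ > 0. Define I_0(y) = y^{−θ} + y^{−2θ} and I_m(y) = (∏_{j=1}^m δ_j^{(1)})·y^{−θ} + (∏_{j=1}^m δ_j^{(2)})·y^{−2θ} for y > 0, where δ_j^{(1)} = 1/(p_j^θ·q_j^{1−θ} + (1−p_j)^θ·(1−q_j)^{1−θ}) and δ_j^{(2)} = 1/(p_j^{2θ}·q_j^{1−2θ} + (1−p_j)^{2θ}·(1−q_j)^{1−2θ}). Then (I_0, I_m) satisfies the generalized integral equation of the binomial model with parameters (p_j, q_j)_{j=1}^m. (The inverse-marginal identity of Example 3.2 for an inverse marginal that is a sum of two power functions.) -/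
/-- The `i`-th binary digit of `j` (for `i ≥ 1`), i.e. `j = Σ_{i=1}^m γ_{j,i}·2^{i-1}`. -/
def gam (j i : ℕ) : ℕ := if Nat.testBit j (i - 1) then 1 else 0

/-- `I` and `J` satisfy the generalized integral equation of the binomial model
with parameters `(p_i, q_i)_{i=1}^m`. -/
def GIE (m : ℕ) (p q : ℕ → ℝ) (I J : ℝ → ℝ) : Prop :=
  ∀ y > (0 : ℝ),
    I y = ∑ j ∈ Finset.range (2 ^ m),
      (∏ i ∈ Finset.Icc 1 m, q i ^ gam j i * (1 - q i) ^ (1 - gam j i)) *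
        J (y * ∏ i ∈ Finset.Icc 1 m,
            (q i ^ gam j i * (1 - q i) ^ (1 - gam j i)) /
              (p i ^ gam j i * (1 - p i) ^ (1 - gam j i)))

lemma gam_add_pow {m j : ℕ} (hj : j < 2 ^ m) {i : ℕ} (hi : i ∈ Finset.Icc 1 m) :
    gam (2 ^ m + j) i = gam j i := by
  simp only [Finset.mem_Icc] at hi
  unfold gam
  rw [Nat.testBit_two_pow_add_gt (by omega)]

lemma gam_top_zero {m j : ℕ} (hj : j < 2 ^ m) : gam j (m + 1) = 0 := by
  unfold gam
  simp [Nat.testBit_lt_two_pow hj]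

lemma gam_top_one {m j : ℕ} (hj : j < 2 ^ m) : gam (2 ^ m + j) (m + 1) = 1 := by
  unfold gam
  simp [Nat.testBit_two_pow_add_eq, Nat.testBit_lt_two_pow hj]

lemma sum_prod_gam (m : ℕ) (f : ℕ → ℕ → ℝ) :
    ∑ j ∈ Finset.range (2 ^ m), ∏ i ∈ Finset.Icc 1 m, f i (gam j i)
      = ∏ i ∈ Finset.Icc 1 m, (f i 0 + f i 1) := by
  induction m with
  | zero => simp
  | succ m ih =>
    have h2 : (2 : ℕ) ^ (m + 1) = 2 ^ m + 2 ^ m := by ring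
    rw [h2, ← Finset.sum_range_add_sum_Ico _ (Nat.le_add_right _ _),
      Finset.sum_Ico_eq_sum_range]
    simp only [Nat.add_sub_cancel]
    have e1 : ∀ j ∈ Finset.range (2 ^ m),
        ∏ i ∈ Finset.Icc 1 (m + 1), f i (gam j i)
          = (∏ i ∈ Finset.Icc 1 m, f i (gam j i)) * f (m + 1) 0 := by
      intro j hj
      rw [Finset.prod_Icc_succ_top (Nat.le_add_left 1 m), gam_top_zero (Finset.mem_range.mp hj)]
    have e2 : ∀ j ∈ Finset.range (2 ^ m),
        ∏ i ∈ Finset.Icc 1 (m + 1), f i (gam (2 ^ m + j) i)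
          = (∏ i ∈ Finset.Icc 1 m, f i (gam j i)) * f (m + 1) 1 := by
      intro j hj
      rw [Finset.prod_Icc_succ_top (Nat.le_add_left 1 m), gam_top_one (Finset.mem_range.mp hj)]
      congr 1
      exact Finset.prod_congr rfl fun i hi => by
        rw [gam_add_pow (Finset.mem_range.mp hj) hi]
    rw [Finset.sum_congr rfl e1, Finset.sum_congr rfl e2, ← Finset.sum_mul, ← Finset.sum_mul,
      ih, Finset.prod_Icc_succ_top (Nat.le_add_left 1 m)]
    ring

lemma pair_calc {a b : ℝ} (ha : 0 < a) (hb : 0 < b) (t : ℝ) :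
    b * (b / a) ^ (-t) = a ^ t * b ^ (1 - t) := by
  rw [Real.rpow_neg (div_nonneg hb.le ha.le), Real.div_rpow hb.le ha.le,
    Real.rpow_sub hb, Real.rpow_one]
  have h1 : (0 : ℝ) < a ^ t := Real.rpow_pos_of_pos ha t
  have h2 : (0 : ℝ) < b ^ t := Real.rpow_pos_of_pos hb t
  field_simp

lemma piece (m : ℕ) (p q : ℕ → ℝ)
    (hp : ∀ j ∈ Finset.Icc 1 m, p j ∈ Set.Ioo (0 : ℝ) 1)
    (hq : ∀ j ∈ Finset.Icc 1 m, q j ∈ Set.Ioo (0 : ℝ) 1)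
    (t : ℝ) {y : ℝ} (hy : 0 < y) :
    ∑ j ∈ Finset.range (2 ^ m),
      (∏ i ∈ Finset.Icc 1 m, q i ^ gam j i * (1 - q i) ^ (1 - gam j i)) *
        (y * ∏ i ∈ Finset.Icc 1 m,
            (q i ^ gam j i * (1 - q i) ^ (1 - gam j i)) /
              (p i ^ gam j i * (1 - p i) ^ (1 - gam j i))) ^ (-t)
      = (∏ i ∈ Finset.Icc 1 m,
          (p i ^ t * q i ^ (1 - t) + (1 - p i) ^ t * (1 - q i) ^ (1 - t))) * y ^ (-t) := by
  have hterm : ∀ j ∈ Finset.range (2 ^ m),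
      (∏ i ∈ Finset.Icc 1 m, q i ^ gam j i * (1 - q i) ^ (1 - gam j i)) *
        (y * ∏ i ∈ Finset.Icc 1 m,
            (q i ^ gam j i * (1 - q i) ^ (1 - gam j i)) /
              (p i ^ gam j i * (1 - p i) ^ (1 - gam j i))) ^ (-t)
      = y ^ (-t) * ∏ i ∈ Finset.Icc 1 m,
          ((q i ^ gam j i * (1 - q i) ^ (1 - gam j i)) *
            ((q i ^ gam j i * (1 - q i) ^ (1 - gam j i)) /
              (p i ^ gam j i * (1 - p i) ^ (1 - gam j i))) ^ (-t)) := by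
    intro j _
    have hrpos : ∀ i ∈ Finset.Icc 1 m,
        0 ≤ (q i ^ gam j i * (1 - q i) ^ (1 - gam j i)) /
              (p i ^ gam j i * (1 - p i) ^ (1 - gam j i)) := by
      intro i hi
      obtain ⟨h0, h1⟩ := hp i hi
      obtain ⟨h2, h3⟩ := hq i hi
      exact le_of_lt (div_pos (mul_pos (pow_pos h2 _) (pow_pos (by linarith) _))
        (mul_pos (pow_pos h0 _) (pow_pos (by linarith) _)))
    rw [Real.mul_rpow hy.le (Finset.prod_nonneg hrpos),
      ← Real.finset_prod_rpow _ _ hrpos]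
    conv_rhs => rw [Finset.prod_mul_distrib]
    ring
  rw [Finset.sum_congr rfl hterm, ← Finset.mul_sum,
    sum_prod_gam m (fun i b => q i ^ b * (1 - q i) ^ (1 - b) *
      (q i ^ b * (1 - q i) ^ (1 - b) / (p i ^ b * (1 - p i) ^ (1 - b))) ^ (-t)), mul_comm]
  congr 1
  refine Finset.prod_congr rfl fun i hi => ?_
  obtain ⟨hp0, hp1⟩ := hp i hi
  obtain ⟨hq0, hq1⟩ := hq i hi
  simp only [pow_zero, pow_one, one_mul, Nat.sub_zero, Nat.sub_self, mul_one]
  rw [pair_calc (by linarith : (0:ℝ) < 1 - p i) (by linarith : (0:ℝ) < 1 - q i) t,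
    pair_calc hp0 hq0 t]
  ring

/-- The inverse-marginal identity of Example 3.2 for an inverse marginal that is a sum
of two power functions. -/
theorem stmt4 (m : ℕ) (hm : 1 ≤ m) (p q : ℕ → ℝ)
    (hp : ∀ j ∈ Finset.Icc 1 m, p j ∈ Set.Ioo (0 : ℝ) 1)
    (hq : ∀ j ∈ Finset.Icc 1 m, q j ∈ Set.Ioo (0 : ℝ) 1)
    (θ : ℝ) (hθ : 0 < θ) :
    GIE m p q (fun y => y ^ (-θ) + y ^ (-(2 * θ)))
      (fun y =>
        (∏ j ∈ Finset.Icc 1 m,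
            (p j ^ θ * q j ^ (1 - θ) + (1 - p j) ^ θ * (1 - q j) ^ (1 - θ))⁻¹) * y ^ (-θ) +
        (∏ j ∈ Finset.Icc 1 m,
            (p j ^ (2 * θ) * q j ^ (1 - 2 * θ) +
              (1 - p j) ^ (2 * θ) * (1 - q j) ^ (1 - 2 * θ))⁻¹) * y ^ (-(2 * θ))) := by
  intro y hy
  have hd1 : ∀ i ∈ Finset.Icc 1 m,
      0 < p i ^ θ * q i ^ (1 - θ) + (1 - p i) ^ θ * (1 - q i) ^ (1 - θ) := by
    intro i hi
    obtain ⟨h0, h1⟩ := hp i hi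
    obtain ⟨h2, h3⟩ := hq i hi
    have := Real.rpow_pos_of_pos h0 θ
    have := Real.rpow_pos_of_pos h2 (1 - θ)
    have := Real.rpow_pos_of_pos (by linarith : (0:ℝ) < 1 - p i) θ
    have := Real.rpow_pos_of_pos (by linarith : (0:ℝ) < 1 - q i) (1 - θ)
    nlinarith
  have hd2 : ∀ i ∈ Finset.Icc 1 m,
      0 < p i ^ (2 * θ) * q i ^ (1 - 2 * θ) + (1 - p i) ^ (2 * θ) * (1 - q i) ^ (1 - 2 * θ) := by
    intro i hi
    obtain ⟨h0, h1⟩ := hp i hi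
    obtain ⟨h2, h3⟩ := hq i hi
    have := Real.rpow_pos_of_pos h0 (2 * θ)
    have := Real.rpow_pos_of_pos h2 (1 - 2 * θ)
    have := Real.rpow_pos_of_pos (by linarith : (0:ℝ) < 1 - p i) (2 * θ)
    have := Real.rpow_pos_of_pos (by linarith : (0:ℝ) < 1 - q i) (1 - 2 * θ)
    nlinarith
  have hinv1 : (∏ j ∈ Finset.Icc 1 m,
        (p j ^ θ * q j ^ (1 - θ) + (1 - p j) ^ θ * (1 - q j) ^ (1 - θ))⁻¹) *
      (∏ j ∈ Finset.Icc 1 m,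
        (p j ^ θ * q j ^ (1 - θ) + (1 - p j) ^ θ * (1 - q j) ^ (1 - θ))) = 1 := by
    rw [← Finset.prod_mul_distrib,
      Finset.prod_congr rfl (fun i hi => inv_mul_cancel₀ (hd1 i hi).ne'),
      Finset.prod_const_one]
  have hinv2 : (∏ j ∈ Finset.Icc 1 m,
        (p j ^ (2 * θ) * q j ^ (1 - 2 * θ) + (1 - p j) ^ (2 * θ) * (1 - q j) ^ (1 - 2 * θ))⁻¹) *
      (∏ j ∈ Finset.Icc 1 m,
        (p j ^ (2 * θ) * q j ^ (1 - 2 * θ) + (1 - p j) ^ (2 * θ) * (1 - q j) ^ (1 - 2 * θ))) = 1 := by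
    rw [← Finset.prod_mul_distrib,
      Finset.prod_congr rfl (fun i hi => inv_mul_cancel₀ (hd2 i hi).ne'),
      Finset.prod_const_one]
  show y ^ (-θ) + y ^ (-(2 * θ)) = _
  trans ((∏ j ∈ Finset.Icc 1 m,
        (p j ^ θ * q j ^ (1 - θ) + (1 - p j) ^ θ * (1 - q j) ^ (1 - θ))⁻¹) *
      ∑ j ∈ Finset.range (2 ^ m),
        (∏ i ∈ Finset.Icc 1 m, q i ^ gam j i * (1 - q i) ^ (1 - gam j i)) *
          (y * ∏ i ∈ Finset.Icc 1 m,
              (q i ^ gam j i * (1 - q i) ^ (1 - gam j i)) /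
                (p i ^ gam j i * (1 - p i) ^ (1 - gam j i))) ^ (-θ)
    + (∏ j ∈ Finset.Icc 1 m,
        (p j ^ (2 * θ) * q j ^ (1 - 2 * θ) + (1 - p j) ^ (2 * θ) * (1 - q j) ^ (1 - 2 * θ))⁻¹) *
      ∑ j ∈ Finset.range (2 ^ m),
        (∏ i ∈ Finset.Icc 1 m, q i ^ gam j i * (1 - q i) ^ (1 - gam j i)) *
          (y * ∏ i ∈ Finset.Icc 1 m,
              (q i ^ gam j i * (1 - q i) ^ (1 - gam j i)) /
                (p i ^ gam j i * (1 - p i) ^ (1 - gam j i))) ^ (-(2 * θ)))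
  · rw [piece m p q hp hq θ hy, piece m p q hp hq (2 * θ) hy,
      ← mul_assoc, ← mul_assoc, hinv1, hinv2, one_mul, one_mul]
  · rw [Finset.mul_sum, Finset.mul_sum, ← Finset.sum_add_distrib]
    exact Finset.sum_congr rfl fun j _ => by ring
end

section
/- Let p, q ∈ (0,1), θ > 1, C₁ = p^θ·q^{1−θ}, C₂ = (1−p)^θ·(1−q)^{1−θ}, and define t(D) = (D·(1−p)/(1−D·p))^θ for D ∈ (0, 1/p). Then D ↦ t(D) is strictly increasing on (0, 1/p) with t(1) = 1, and the composed map D ↦ f(t(D)) is strictly increasing on (0,1] and strictly decreasing on [1, 1/p). In particular, for D_u ∈ [1, 1/p) the quantity f(t(D_u)) is non-increasing in D_u, for D_d ∈ (0,1] the quantity f(t(D_d)) is non-decreasing in D_d, and hence min{f(t(D_u)), f(t(D_d))} is non-increasing in D_u and non-decreasing in D_d. (The last statement of Proposition 4.1.) -/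
/-- The per-period performance factor `f(t) = C₁·(C₁ + t⁻¹C₂)^{−1/θ} + C₂·(tC₁ + C₂)^{−1/θ}`. -/
noncomputable def f (θ C1 C2 t : ℝ) : ℝ :=
  C1 * (C1 + t⁻¹ * C2) ^ (-(1 / θ)) + C2 * (t * C1 + C2) ^ (-(1 / θ))

/-- `t(D) = (D·(1−p)/(1−D·p))^θ`. -/
noncomputable def tD (p θ D : ℝ) : ℝ := (D * (1 - p) / (1 - D * p)) ^ θ

lemma hasDerivAt_f (θ C1 C2 : ℝ) (h1 : 0 < C1) (h2 : 0 < C2)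
    {t : ℝ} (ht : 0 < t) :
    HasDerivAt (f θ C1 C2)
      ((C1 * C2 / θ) * (t * C1 + C2) ^ (-(1/θ) - 1) * (t ^ (1/θ - 1) - 1)) t := by
  have hu : 0 < C1 + t⁻¹ * C2 := by positivity
  have hv : 0 < t * C1 + C2 := by positivity
  have d1 : HasDerivAt (fun s : ℝ => C1 + s⁻¹ * C2) (-(t^2)⁻¹ * C2) t := by
    simpa using ((hasDerivAt_inv ht.ne').mul_const C2).const_add C1
  have d2 : HasDerivAt (fun s : ℝ => s * C1 + C2) C1 t := by
    simpa using ((hasDerivAt_id t).mul_const C1).add_const C2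
  have D1 := ((d1.rpow_const (p := -(1/θ)) (Or.inl hu.ne')).const_mul C1)
  have D2 := ((d2.rpow_const (p := -(1/θ)) (Or.inl hv.ne')).const_mul C2)
  have comb := D1.add D2
  have key : (C1 + t⁻¹ * C2) ^ (-(1/θ) - 1)
      = t ^ (1/θ + 1) * (t * C1 + C2) ^ (-(1/θ) - 1) := by
    have hb : C1 + t⁻¹ * C2 = t⁻¹ * (t * C1 + C2) := by field_simp
    rw [hb, Real.mul_rpow (inv_nonneg.2 ht.le) hv.le, Real.inv_rpow ht.le,
      ← Real.rpow_neg ht.le]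
    congr 1
    ring
  have tsq : ((t^2)⁻¹ : ℝ) = t ^ (-2 : ℝ) := by
    rw [← Real.rpow_two, ← Real.rpow_neg ht.le]
  have tpow : t ^ (-2:ℝ) * t ^ (1/θ + 1) = t ^ (1/θ - 1) := by
    rw [← Real.rpow_add ht]; congr 1; ring
  refine comb.congr_deriv ?_
  symm
  rw [key, tsq]
  linear_combination (-(C1 * C2) / θ * (t * C1 + C2) ^ (-(1/θ) - 1)) * tpow

lemma f_contOn (θ C1 C2 : ℝ) (h1 : 0 < C1) (h2 : 0 < C2) {s : Set ℝ}
    (hs : s ⊆ Set.Ioi 0) : ContinuousOn (f θ C1 C2) s := fun t ht =>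
  ((hasDerivAt_f θ C1 C2 h1 h2 (hs ht)).continuousAt).continuousWithinAt

lemma f_strictMonoOn (θ C1 C2 : ℝ) (hθ : 1 < θ) (h1 : 0 < C1) (h2 : 0 < C2) :
    StrictMonoOn (f θ C1 C2) (Set.Ioc 0 1) := by
  have hθ0 : (0:ℝ) < θ := by linarith
  apply strictMonoOn_of_deriv_pos (convex_Ioc 0 1)
    (f_contOn θ C1 C2 h1 h2 (fun x hx => hx.1))
  intro t ht
  rw [interior_Ioc] at ht
  rw [(hasDerivAt_f θ C1 C2 h1 h2 ht.1).deriv]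
  have hv : 0 < t * C1 + C2 := add_pos (mul_pos ht.1 h1) h2
  have hexp : 1/θ - 1 < 0 := by
    have : 1/θ < 1 := by rw [div_lt_one hθ0]; linarith
    linarith
  have h3 : 1 < t ^ (1/θ - 1) :=
    Real.one_lt_rpow_iff_of_pos ht.1 |>.2 (Or.inr ⟨ht.2, hexp⟩)
  exact mul_pos (mul_pos (by positivity) (Real.rpow_pos_of_pos hv _)) (by linarith)

lemma f_strictAntiOn (θ C1 C2 : ℝ) (hθ : 1 < θ) (h1 : 0 < C1) (h2 : 0 < C2) :
    StrictAntiOn (f θ C1 C2) (Set.Ici 1) := by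
  have hθ0 : (0:ℝ) < θ := by linarith
  apply strictAntiOn_of_deriv_neg (convex_Ici 1)
    (f_contOn θ C1 C2 h1 h2 (fun x hx => Set.mem_Ioi.2 (lt_of_lt_of_le one_pos (Set.mem_Ici.1 hx))))
  intro t ht
  rw [interior_Ici] at ht
  have ht0 : (0:ℝ) < t := lt_trans one_pos ht
  rw [(hasDerivAt_f θ C1 C2 h1 h2 ht0).deriv]
  have hv : 0 < t * C1 + C2 := add_pos (mul_pos ht0 h1) h2
  have hexp : 1/θ - 1 < 0 := by
    have : 1/θ < 1 := by rw [div_lt_one hθ0]; linarith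
    linarith
  have h3 : t ^ (1/θ - 1) < 1 := Real.rpow_lt_one_of_one_lt_of_neg ht hexp
  have hrp := Real.rpow_pos_of_pos hv (-(1/θ) - 1)
  have hc : 0 < C1 * C2 / θ := by positivity
  have : t ^ (1/θ - 1) - 1 < 0 := by linarith
  exact mul_neg_of_pos_of_neg (by positivity) this

/-- The last statement of Proposition 4.1. -/
theorem stmt12 (p q θ : ℝ) (hp : p ∈ Set.Ioo (0 : ℝ) 1) (hq : q ∈ Set.Ioo (0 : ℝ) 1)
    (hθ : 1 < θ) (C1 C2 : ℝ)
    (hC1 : C1 = p ^ θ * q ^ (1 - θ))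
    (hC2 : C2 = (1 - p) ^ θ * (1 - q) ^ (1 - θ)) :
    StrictMonoOn (tD p θ) (Set.Ioo 0 (1 / p)) ∧
    tD p θ 1 = 1 ∧
    StrictMonoOn (fun D => f θ C1 C2 (tD p θ D)) (Set.Ioc 0 1) ∧
    StrictAntiOn (fun D => f θ C1 C2 (tD p θ D)) (Set.Ico 1 (1 / p)) ∧
    AntitoneOn (fun Du => f θ C1 C2 (tD p θ Du)) (Set.Ico 1 (1 / p)) ∧
    MonotoneOn (fun Dd => f θ C1 C2 (tD p θ Dd)) (Set.Ioc 0 1) ∧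
    (∀ Du ∈ Set.Ico (1 : ℝ) (1 / p), ∀ Du' ∈ Set.Ico (1 : ℝ) (1 / p),
      ∀ Dd ∈ Set.Ioc (0 : ℝ) 1, ∀ Dd' ∈ Set.Ioc (0 : ℝ) 1,
      Du ≤ Du' → Dd ≤ Dd' →
        min (f θ C1 C2 (tD p θ Du')) (f θ C1 C2 (tD p θ Dd)) ≤
          min (f θ C1 C2 (tD p θ Du)) (f θ C1 C2 (tD p θ Dd'))) := by
  obtain ⟨hp0, hp1⟩ := hp
  obtain ⟨hq0, hq1⟩ := hq
  have hθ0 : (0:ℝ) < θ := by linarith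
  have hC1pos : 0 < C1 := by
    rw [hC1]
    exact mul_pos (Real.rpow_pos_of_pos hp0 θ) (Real.rpow_pos_of_pos hq0 _)
  have hC2pos : 0 < C2 := by
    rw [hC2]
    exact mul_pos (Real.rpow_pos_of_pos (by linarith) θ)
      (Real.rpow_pos_of_pos (by linarith) _)
  have h1p : (1:ℝ) < 1 / p := one_lt_one_div hp0 hp1
  -- strict monotonicity of tD
  have htD : StrictMonoOn (tD p θ) (Set.Ioo 0 (1 / p)) := by
    intro D1 hD1 D2 hD2 h12
    have hden1 : 0 < 1 - D1 * p := by
      have := (lt_div_iff₀ hp0).1 hD1.2; linarith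
    have hden2 : 0 < 1 - D2 * p := by
      have := (lt_div_iff₀ hp0).1 hD2.2; linarith
    have hbase : D1 * (1 - p) / (1 - D1 * p) < D2 * (1 - p) / (1 - D2 * p) := by
      rw [div_lt_div_iff₀ hden1 hden2]
      nlinarith [hD1.1, hD2.1]
    have hb1 : 0 ≤ D1 * (1 - p) / (1 - D1 * p) := by
      apply div_nonneg (by nlinarith [hD1.1]) hden1.le
    exact Real.rpow_lt_rpow hb1 hbase hθ0
  have htD1 : tD p θ 1 = 1 := by
    unfold tD
    rw [one_mul, one_mul, div_self (by linarith : (1:ℝ) - p ≠ 0), Real.one_rpow]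
  -- tD maps Ioc 0 1 into Ioc 0 1
  have hmem1 : (1:ℝ) ∈ Set.Ioo 0 (1/p) := ⟨one_pos, h1p⟩
  have htDpos : ∀ D ∈ Set.Ioo (0:ℝ) (1/p), 0 < tD p θ D := by
    intro D hD
    have hden : 0 < 1 - D * p := by
      have := (lt_div_iff₀ hp0).1 hD.2; linarith
    exact Real.rpow_pos_of_pos (div_pos (mul_pos hD.1 (by linarith)) hden) θ
  have hsub1 : Set.Ioc (0:ℝ) 1 ⊆ Set.Ioo 0 (1/p) := fun x hx =>
    ⟨hx.1, lt_of_le_of_lt hx.2 h1p⟩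
  have hmap1 : ∀ D ∈ Set.Ioc (0:ℝ) 1, tD p θ D ∈ Set.Ioc (0:ℝ) 1 := by
    intro D hD
    refine ⟨htDpos D (hsub1 hD), ?_⟩
    rcases eq_or_lt_of_le hD.2 with h | h
    · rw [h, htD1]
    · exact le_of_lt (htD1 ▸ htD (hsub1 hD) hmem1 h)
  have hmap2 : ∀ D ∈ Set.Ico (1:ℝ) (1/p), tD p θ D ∈ Set.Ici (1:ℝ) := by
    intro D hD
    rcases eq_or_lt_of_le hD.1 with h | h
    · rw [← h, htD1]
      exact Set.self_mem_Ici
    · exact le_of_lt (htD1 ▸ htD hmem1 ⟨lt_trans one_pos h, hD.2⟩ h)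
  have hsub2 : Set.Ico (1:ℝ) (1/p) ⊆ Set.Ioo 0 (1/p) := fun x hx =>
    ⟨lt_of_lt_of_le one_pos hx.1, hx.2⟩
  have hfm := f_strictMonoOn θ C1 C2 hθ hC1pos hC2pos
  have hfa := f_strictAntiOn θ C1 C2 hθ hC1pos hC2pos
  have hcomp1 : StrictMonoOn (fun D => f θ C1 C2 (tD p θ D)) (Set.Ioc 0 1) := by
    intro D1 h1 D2 h2 h12
    exact hfm (hmap1 D1 h1) (hmap1 D2 h2) (htD (hsub1 h1) (hsub1 h2) h12)
  have hcomp2 : StrictAntiOn (fun D => f θ C1 C2 (tD p θ D)) (Set.Ico 1 (1/p)) := by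
    intro D1 h1 D2 h2 h12
    exact hfa (hmap2 D1 h1) (hmap2 D2 h2) (htD (hsub2 h1) (hsub2 h2) h12)
  refine ⟨htD, htD1, hcomp1, hcomp2, hcomp2.antitoneOn, hcomp1.monotoneOn, ?_⟩
  intro Du hDu Du' hDu' Dd hDd Dd' hDd' hu hd
  exact min_le_min (hcomp2.antitoneOn hDu hDu' hu) (hcomp1.monotoneOn hDd hDd' hd)
end
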